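/- arXiv:1205.0371 — 2 statements merged into one kernel-verified Lean document; each statement's English description precedes it below -/
import Mathlib

section
/- For every odd integer n ≥ 3, N(M_{n,α}) ≡ 7 (mod 8) (i.e., N(M_{n,α}) ≡ −1 (mod 8)). -/
/-- `α = 2 + √2` in `ℤ√2`. -/
def alphaZ : ℤ√2 := 2 + Zsqrtd.sqrtd

/-- The Mersenne number `M_{n,α} = (α^n - 1)/(α - 1) = (α^n - 1)·(√2 - 1)` in `ℤ√2`,
where `α = 2 + √2` (note `(α - 1)⁻¹ = (1 + √2)⁻¹ = √2 - 1`). -/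
def Mers (n : ℕ) : ℤ√2 := (alphaZ ^ n - 1) * (Zsqrtd.sqrtd - 1)

/-- `v n` is the rational part of `(1 + √2)^n`, i.e. `(1+√2)^n = v n + (w n)·√2`. -/
def vCoeff (n : ℕ) : ℤ := (((1 + Zsqrtd.sqrtd : ℤ√2)) ^ n).re

/-- `w n` is the coefficient of `√2` in `(1 + √2)^n`, i.e. `(1+√2)^n = v n + (w n)·√2`. -/
def wCoeff (n : ℕ) : ℤ := (((1 + Zsqrtd.sqrtd : ℤ√2)) ^ n).im

/-
Since `N(√2 - 1) = -1` and `N(α) = 2`, expanding `N(α^n - 1)` gives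
`N(M_{n,α}) = 2·re(α^n) - 2^n - 1`. For `n ≥ 3` both `2^n` and `2·re(α^n)` vanish mod 8,
the latter because `α^3 = 20 + 14√2` and `re((20 + 14√2)(x + y√2)) = 4(5x + 7y)`.
-/

theorem Zsqrtd.norm_sub_one {d : ℤ} (z : ℤ√d) : (z - 1).norm = z.norm - 2 * z.re + 1 := by
  simp only [Zsqrtd.norm_def, Zsqrtd.re_sub, Zsqrtd.im_sub, Zsqrtd.re_one, Zsqrtd.im_one]
  ring

theorem Zsqrtd.norm_pow {d : ℤ} (z : ℤ√d) (n : ℕ) : (z ^ n).norm = z.norm ^ n :=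
  map_pow Zsqrtd.normMonoidHom z n

lemma norm_alphaZ : alphaZ.norm = 2 := by decide

lemma norm_sqrtd_sub_one : (Zsqrtd.sqrtd - 1 : ℤ√2).norm = -1 := by decide

lemma norm_mers (n : ℕ) : (Mers n).norm = 2 * (alphaZ ^ n).re - 2 ^ n - 1 := by
  rw [Mers, Zsqrtd.norm_mul, Zsqrtd.norm_sub_one, Zsqrtd.norm_pow, norm_alphaZ,
    norm_sqrtd_sub_one]
  ring

lemma four_dvd_re_alphaZ_pow {n : ℕ} (hn : 3 ≤ n) : 4 ∣ (alphaZ ^ n).re := by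
  obtain ⟨k, rfl⟩ := Nat.exists_eq_add_of_le hn
  have alphaZ_cube : alphaZ ^ 3 = ⟨20, 14⟩ := by decide
  rw [pow_add, alphaZ_cube, Zsqrtd.re_mul]
  exact ⟨5 * (alphaZ ^ k).re + 7 * (alphaZ ^ k).im, by ring⟩

theorem norm_mersenne_mod_eight_general (n : ℕ) (hn : 3 ≤ n) :
    Zsqrtd.norm (Mers n) ≡ 7 [ZMOD 8] := by
  obtain ⟨r, hr⟩ := four_dvd_re_alphaZ_pow hn
  obtain ⟨k, rfl⟩ := Nat.exists_eq_add_of_le hn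
  rw [norm_mers, hr, Int.modEq_iff_dvd]
  exact ⟨1 - r + 2 ^ k, by ring⟩

/-- **(Property 3, §1).** For every odd `n ≥ 3`, `N(M_{n,α}) ≡ -1 ≡ 7 (mod 8)`. -/
theorem norm_mersenne_mod_eight (n : ℕ) (hn : 3 ≤ n) (hodd : Odd n) :
    Zsqrtd.norm (Mers n) ≡ 7 [ZMOD 8] :=
  norm_mersenne_mod_eight_general n hn
end

section
/- For every odd integer p ≥ 5, N(M_{p,α}) = h·2^{(p+3)/2} − 1 where h = w_p − 2^{(p−3)/2} is an odd integer (w_p being the coefficient of √2 in (1+√2)^p). -/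
/-
Write `ε = 1 + √2`, so that `α = √2·ε` and `N(ε) = -1`. For `p = 2m + 1`, `√2^p = 2^m·√2`, hence
`α^p = 2^(m+1)·w_p + 2^m·v_p·√2`. Since `N(√2 - 1) = -1` and `v_p² - 2w_p² = N(ε)^p = -1`,
`N(M_p) = 2·2^(2m)·v_p² - (2^(m+1)·w_p - 1)² = 2^(m+2)·w_p - 2^(2m+1) - 1`,
which is `(w_p - 2^(m-1))·2^(m+2) - 1`; the factor is odd because `ε^p ≡ ε (mod 2)`.
-/

namespace Zsqrtd

variable {d : ℤ}

theorem norm_pow_s11 (x : ℤ√d) (n : ℕ) : (x ^ n).norm = x.norm ^ n :=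
  map_pow normMonoidHom x n

theorem sqrtd_pow_two_mul_add_one (m : ℕ) : (sqrtd : ℤ√d) ^ (2 * m + 1) = ⟨0, d ^ m⟩ := by
  induction m with
  | zero => ext <;> simp
  | succ m ih =>
    rw [show 2 * (m + 1) + 1 = 2 * m + 1 + 2 by ring, pow_add, ih]
    ext <;> simp [pow_succ]

end Zsqrtd

open Zsqrtd

theorem norm_one_add_sqrtd : (1 + sqrtd : ℤ√2).norm = -1 := by
  simp [norm_def]

theorem vCoeff_sq_sub_two_mul_wCoeff_sq (n : ℕ) : vCoeff n ^ 2 - 2 * wCoeff n ^ 2 = (-1) ^ n := by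
  rw [← norm_one_add_sqrtd, ← norm_pow_s11, norm_def, vCoeff, wCoeff]
  ring

theorem odd_wCoeff_two_mul_add_one (m : ℕ) : Odd (wCoeff (2 * m + 1)) := by
  have hsq : (1 + sqrtd : ℤ√2) ^ 2 = ⟨3, 2⟩ := by ext <;> simp [pow_two]
  induction m with
  | zero => simp [wCoeff]
  | succ m ih =>
    obtain ⟨j, hj⟩ := ih
    refine ⟨vCoeff (2 * m + 1) + 3 * j + 1, ?_⟩
    rw [wCoeff] at hj
    rw [wCoeff, vCoeff, show 2 * (m + 1) + 1 = 2 * m + 1 + 2 by ring, pow_add, hsq, im_mul, hj]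
    ring

theorem alphaZ_eq_sqrtd_mul : alphaZ = sqrtd * (1 + sqrtd) := by
  ext <;> simp [alphaZ]

theorem alphaZ_pow_two_mul_add_one (m : ℕ) :
    alphaZ ^ (2 * m + 1) = ⟨2 ^ (m + 1) * wCoeff (2 * m + 1), 2 ^ m * vCoeff (2 * m + 1)⟩ := by
  rw [alphaZ_eq_sqrtd_mul, mul_pow, sqrtd_pow_two_mul_add_one, vCoeff, wCoeff]
  ext <;> simp only [re_mul, im_mul] <;> ring

theorem norm_Mers_two_mul_add_one (m : ℕ) :
    (Mers (2 * m + 1)).norm = 2 ^ (m + 2) * wCoeff (2 * m + 1) - 2 ^ (2 * m + 1) - 1 := by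
  have hnorm := vCoeff_sq_sub_two_mul_wCoeff_sq (2 * m + 1)
  rw [Odd.neg_one_pow (odd_two_mul_add_one m)] at hnorm
  have hsub : (sqrtd - 1 : ℤ√2).norm = -1 := by simp [norm_def]
  rw [Mers, norm_mul, hsub, alphaZ_pow_two_mul_add_one, norm_def]
  simp only [re_sub, im_sub, re_one, im_one]
  linear_combination 2 * 2 ^ (2 * m) * hnorm

/-- **(§2).** For every odd `p ≥ 5`, `N(M_{p,α}) = h·2^((p+3)/2) - 1` with
`h = w_p - 2^((p-3)/2)` odd. -/
theorem norm_mersenne_eq_h_mul_pow_sub_one (p : ℕ) (hp : 5 ≤ p) (hodd : Odd p) :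
    Odd (wCoeff p - 2 ^ ((p - 3) / 2)) ∧
      Zsqrtd.norm (Mers p) = (wCoeff p - 2 ^ ((p - 3) / 2)) * 2 ^ ((p + 3) / 2) - 1 := by
  obtain ⟨j, rfl⟩ : ∃ j, p = 2 * (j + 1) + 1 := by
    obtain ⟨m, rfl⟩ := hodd
    exact ⟨m - 1, by omega⟩
  rw [show (2 * (j + 1) + 1 - 3) / 2 = j by omega, show (2 * (j + 1) + 1 + 3) / 2 = j + 3 by omega]
  constructor
  · exact (odd_wCoeff_two_mul_add_one (j + 1)).sub_even (even_two.pow_of_ne_zero (by omega))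
  · rw [norm_Mers_two_mul_add_one]
    ring
end
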